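/- arXiv:0907.0953 — 4 statements merged into one kernel-verified Lean document; each statement's English description precedes it below -/
import Mathlib

section
/- Let g ≥ 2, r ≥ 1, d ≥ 1, s, μ be integers with d not a perfect square, and let ε ∈ {1, −1}. If there exist integers x₀, y₀ with y₀ ≠ 0, x₀ ≡ μ·y₀ (mod 2g−2) and (r·x₀ + 2(g−1))² − d·r²·y₀² = 4(g−1)·(ε·r − r·s + g−1), then there exist infinitely many pairs of integers (x, y) with x ≡ μ·y (mod 2g−2) and (r·x + 2(g−1))² − d·r²·y² = 4(g−1)·(ε·r − r·s + g−1). -/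
/-!
Write `z₀ = (r x₀ + 2(g-1)) + r y₀ √d ∈ ℤ[√d]`: the equation says that the norm of `z₀` is the
right-hand side, and every `w ≡ z₀ (mod r(2g-2))` of the same norm again comes from a solution
`(x, y)` satisfying the congruence. Pigeonholing the residues of the powers of a nontrivial Pell
unit gives a unit `b` of infinite order with `b ≡ 1 (mod r(2g-2))`, and the `z₀ bⁿ` are infinitely
many such `w`.
-/

namespace Zsqrtd

variable {d : ℤ}

theorem noZeroDivisors_of_not_isSquare (hd : ¬IsSquare d) : NoZeroDivisors (ℤ√d) where
  eq_zero_or_eq_zero_of_mul_eq_zero {a b} h := by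
    have hnsq : ∀ n : ℤ, d ≠ n * n := fun n hn => hd ⟨n, hn⟩
    simpa only [← norm_eq_zero hnsq, norm_mul, norm_zero, mul_eq_zero] using congrArg norm h

theorem exists_pow_sub_one_dvd {M : ℤ} (hM : M ≠ 0) {u : ℤ√d} (hu : IsUnit u) :
    ∃ k > 0, (M : ℤ√d) ∣ u ^ k - 1 := by
  have : NeZero M.natAbs := ⟨Int.natAbs_ne_zero.mpr hM⟩
  obtain ⟨i, j, hij, hres⟩ := Finite.exists_ne_map_eq_of_infinite
    fun n : ℕ => (((u ^ n).re : ZMod M.natAbs), ((u ^ n).im : ZMod M.natAbs))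
  wlog hlt : i < j generalizing i j
  · exact this j i hij.symm hres.symm (by omega)
  have hdvd : (M : ℤ√d) ∣ u ^ j - u ^ i := by
    simp only [Prod.mk.injEq, ZMod.intCast_eq_intCast_iff_dvd_sub, Int.natAbs_dvd] at hres
    simpa only [intCast_dvd, re_sub, im_sub] using hres
  refine ⟨j - i, by omega, ?_⟩
  rwa [← Nat.add_sub_cancel' hlt.le, pow_add, ← mul_sub_one, (hu.pow i).dvd_mul_left] at hdvd

end Zsqrtd

namespace Pell.Solution₁

variable {d : ℤ}

theorem not_isOfFinOrder {a : Solution₁ d} (hx : 0 < a.x) (hy : 0 < a.y) : ¬IsOfFinOrder a := by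
  rw [isOfFinOrder_iff_pow_eq_one]
  rintro ⟨n, hn, ha⟩
  obtain ⟨k, rfl⟩ := Nat.exists_eq_succ_of_ne_zero hn.ne'
  simpa [ha] using y_pow_succ_pos hx hy k

theorem exists_pos_intCast_dvd_sub_one (h₀ : 0 < d) (hd : ¬IsSquare d) {M : ℤ} (hM : M ≠ 0) :
    ∃ b : Solution₁ d, 0 < b.x ∧ 0 < b.y ∧ (M : ℤ√d) ∣ b - 1 := by
  obtain ⟨a, hx, hy⟩ := exists_pos_of_not_isSquare h₀ hd
  obtain ⟨k, hk, hdvd⟩ := Zsqrtd.exists_pow_sub_one_dvd hM (Unitary.isUnit_coe (U := a))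
  obtain ⟨n, rfl⟩ := Nat.exists_eq_succ_of_ne_zero hk.ne'
  exact ⟨a ^ (n + 1), x_pow_pos (by omega) _, y_pow_succ_pos (by omega) hy n, hdvd⟩

end Pell.Solution₁

namespace Zsqrtd

variable {d : ℤ}

theorem infinite_setOf_norm_eq_and_dvd_sub (h₀ : 0 < d) (hd : ¬IsSquare d) {M : ℤ} (hM : M ≠ 0)
    {z : ℤ√d} (hz : z ≠ 0) : {w : ℤ√d | w.norm = z.norm ∧ (M : ℤ√d) ∣ w - z}.Infinite := by
  obtain ⟨b, hx, hy, hb⟩ := Pell.Solution₁.exists_pos_intCast_dvd_sub_one h₀ hd hM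
  have := noZeroDivisors_of_not_isSquare hd
  have hpow : Function.Injective fun n : ℕ => b ^ n :=
    injective_pow_iff_not_isOfFinOrder.mpr (Pell.Solution₁.not_isOfFinOrder hx hy)
  refine Set.infinite_of_injective_forall_mem (f := fun n : ℕ => z * (b ^ n : Pell.Solution₁ d))
    ((mul_right_injective₀ hz).comp (Subtype.val_injective.comp hpow)) fun n => ⟨?_, ?_⟩
  · rw [norm_mul, norm_eq_one_iff_mem_unitary.mpr (b ^ n).2, mul_one]
  · rw [← mul_sub_one]
    exact dvd_mul_of_dvd_right (hb.trans (sub_one_dvd_pow_sub_one _ n)) z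

end Zsqrtd

theorem pell_infinitely_many_solutions_general
    (g r s d μ ε : ℤ) (hg : 2 ≤ g) (hr : 1 ≤ r) (hd : 1 ≤ d)
    (hdsq : ¬ IsSquare d)
    (hsol : ∃ x₀ y₀ : ℤ, y₀ ≠ 0 ∧ x₀ ≡ μ * y₀ [ZMOD (2 * g - 2)] ∧
      (r * x₀ + 2 * (g - 1)) ^ 2 - d * r ^ 2 * y₀ ^ 2
        = 4 * (g - 1) * (ε * r - r * s + (g - 1))) :
    {p : ℤ × ℤ | p.1 ≡ μ * p.2 [ZMOD (2 * g - 2)] ∧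
      (r * p.1 + 2 * (g - 1)) ^ 2 - d * r ^ 2 * p.2 ^ 2
        = 4 * (g - 1) * (ε * r - r * s + (g - 1))}.Infinite := by
  obtain ⟨x₀, y₀, hy₀, hcong, heq⟩ := hsol
  let f : ℤ × ℤ → ℤ√d := fun p => ⟨r * p.1 + 2 * (g - 1), r * p.2⟩
  have hnorm (p : ℤ × ℤ) :
      (f p).norm = (r * p.1 + 2 * (g - 1)) ^ 2 - d * r ^ 2 * p.2 ^ 2 := by
    rw [Zsqrtd.norm_def]; ring
  have hr₀ : r ≠ 0 := by omega
  have hz : f (x₀, y₀) ≠ 0 := fun h => hy₀ <| by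
    simpa [f, hr₀] using congrArg Zsqrtd.im h
  have hM : r * (2 * g - 2) ≠ 0 := mul_ne_zero hr₀ (by omega)
  refine Set.Infinite.of_image f <|
    (Zsqrtd.infinite_setOf_norm_eq_and_dvd_sub (by omega) hdsq hM hz).mono ?_
  rintro w ⟨hw, c, hc⟩
  have hfp : f (x₀ + (2 * g - 2) * c.re, y₀ + (2 * g - 2) * c.im) = w := by
    rw [eq_add_of_sub_eq' hc]
    ext <;> simp only [f, Zsqrtd.re_add, Zsqrtd.im_add, Zsqrtd.re_smul, Zsqrtd.im_smul] <;> ring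
  refine ⟨_, ⟨?_, ?_⟩, hfp⟩
  · refine Int.modEq_add_fac_self.trans (hcong.trans ?_)
    rw [mul_add, mul_left_comm]
    exact Int.modEq_add_fac_self.symm
  · rw [← hnorm, hfp, hw, hnorm, heq]

/-- If `d` is not a square and the Pell-type equation
`(rx + 2(g−1))² − dr²y² = 4(g−1)(εr − rs + g−1)` has a solution with `y₀ ≠ 0`
satisfying the congruence `x₀ ≡ μy₀ (mod 2g−2)`, then it has infinitely many
such solutions. -/
theorem pell_infinitely_many_solutions
    (g r s d μ ε : ℤ) (hg : 2 ≤ g) (hr : 1 ≤ r) (hd : 1 ≤ d)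
    (hdsq : ¬ IsSquare d) (hε : ε = 1 ∨ ε = -1)
    (hsol : ∃ x₀ y₀ : ℤ, y₀ ≠ 0 ∧ x₀ ≡ μ * y₀ [ZMOD (2 * g - 2)] ∧
      (r * x₀ + 2 * (g - 1)) ^ 2 - d * r ^ 2 * y₀ ^ 2
        = 4 * (g - 1) * (ε * r - r * s + (g - 1))) :
    {p : ℤ × ℤ | p.1 ≡ μ * p.2 [ZMOD (2 * g - 2)] ∧
      (r * p.1 + 2 * (g - 1)) ^ 2 - d * r ^ 2 * p.2 ^ 2
        = 4 * (g - 1) * (ε * r - r * s + (g - 1))}.Infinite :=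
  pell_infinitely_many_solutions_general g r s d μ ε hg hr hd hdsq hsol
end

section
/- Let g ≥ 3, r ≥ 1, s ≥ 1 and μ be integers with gcd(μ, 2g−2) = 1. If r divides g−1, or s divides g−1, or r divides 2, or s divides 2, then the set 𝒟₊(g,r,s,μ) ∪ 𝒟₋(g,r,s,μ) ∪ 𝒟̃₊(g,r,s,μ) ∪ 𝒟̃₋(g,r,s,μ) is infinite. -/
/-- The set `𝒟_ε(g,r,s,μ)` of determinants `d ≥ 1` for which the Pell-type equation
`d·r²·y² = (rx + 2(g−1))² − 4(g−1)(εr − rs + g−1)` has a solution with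
`x ≡ μy (mod 2g−2)`. -/
def Dset (g r s μ ε : ℤ) : Set ℤ :=
  {d : ℤ | 1 ≤ d ∧ ∃ x y : ℤ, x ≡ μ * y [ZMOD (2 * g - 2)] ∧
    d * r ^ 2 * y ^ 2
      = (r * x + 2 * (g - 1)) ^ 2 - 4 * (g - 1) * (ε * r - r * s + (g - 1))}

/-!
If `r ∣ 4(g−1)`, say `4(g−1) = r·m`, then for `y = 1` the defining equation of `𝒟₊(g,r,s,μ)`
reduces to `d = x² + m(x + s − 1)`. Every `x ≡ μ (mod 2g−2)` therefore yields an element of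
`𝒟₊(g,r,s,μ)` as soon as this value is positive, and these values are unbounded. Each of the four
divisibility conditions gives `r ∣ 4(g−1)` or `s ∣ 4(g−1)`, hence `𝒟₊` or `𝒟̃₊` is infinite.
-/

theorem Int.exists_modEq_ge {N : ℤ} (hN : N ≠ 0) (a B : ℤ) : ∃ x, x ≡ a [ZMOD N] ∧ B ≤ x := by
  refine ⟨a + N * N * (|B| + |a|), Int.modEq_iff_dvd.2 ⟨-(N * (|B| + |a|)), by ring⟩, ?_⟩
  nlinarith [mul_self_pos.2 hN, abs_nonneg B, abs_nonneg a, le_abs_self B, neg_abs_le a]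

theorem sq_add_mem_Dset_one {g r s μ m x : ℤ} (hm : 4 * (g - 1) = r * m)
    (hx : x ≡ μ [ZMOD (2 * g - 2)]) (hpos : 1 ≤ x ^ 2 + m * (x + s - 1)) :
    x ^ 2 + m * (x + s - 1) ∈ Dset g r s μ 1 :=
  ⟨hpos, x, 1, by rwa [mul_one], by linear_combination (-(r * (x + s - 1))) * hm⟩

theorem Dset_one_infinite {g r s μ : ℤ} (hg : g ≠ 1) (hr : r ∣ 4 * (g - 1)) :
    (Dset g r s μ 1).Infinite := by
  obtain ⟨m, hm⟩ := hr
  refine Set.infinite_of_not_bddAbove (not_bddAbove_iff.2 fun B => ?_)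
  obtain ⟨x, hx, hxB⟩ :=
    Int.exists_modEq_ge (N := 2 * g - 2) (by omega) μ (|B| + |m| + |m * (s - 1)| + 1)
  have hx1 : 0 ≤ x - 1 := by linarith [abs_nonneg B, abs_nonneg m, abs_nonneg (m * (s - 1))]
  have hxm : 0 ≤ x - |m| - 1 := by linarith [abs_nonneg B, abs_nonneg (m * (s - 1))]
  have hmx : x ≤ x ^ 2 + m * x := by nlinarith [mul_nonneg hx1 hxm, neg_abs_le m]
  have hvalue : |B| + 1 ≤ x ^ 2 + m * (x + s - 1) := by
    linarith [neg_abs_le (m * (s - 1)), abs_nonneg m]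
  exact ⟨_, sq_add_mem_Dset_one hm hx (by linarith [abs_nonneg B]),
    by linarith [le_abs_self B]⟩

theorem Dset_union_infinite_general
    (g r s μ : ℤ) (hg : 3 ≤ g)
    (hdiv : r ∣ (g - 1) ∨ s ∣ (g - 1) ∨ r ∣ 2 ∨ s ∣ 2) :
    (Dset g r s μ 1 ∪ Dset g r s μ (-1) ∪ Dset g s r μ 1 ∪ Dset g s r μ (-1)).Infinite := by
  have hg1 : g ≠ 1 := by omega
  have h2 : (2 : ℤ) ∣ 4 * (g - 1) := ⟨2 * (g - 1), by ring⟩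
  have hrs : r ∣ 4 * (g - 1) ∨ s ∣ 4 * (g - 1) := by
    rcases hdiv with h | h | h | h
    exacts [.inl (h.mul_left 4), .inr (h.mul_left 4), .inl (h.trans h2), .inr (h.trans h2)]
  rcases hrs with h | h
  · exact (Dset_one_infinite hg1 h).mono
      (Set.subset_union_left.trans (Set.subset_union_left.trans Set.subset_union_left))
  · exact (Dset_one_infinite hg1 h).mono (Set.subset_union_right.trans Set.subset_union_left)

/-- If `r | g−1`, or `s | g−1`, or `r | 2`, or `s | 2`, then
`𝒟₊ ∪ 𝒟₋ ∪ 𝒟̃₊ ∪ 𝒟̃₋` is infinite. -/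
theorem Dset_union_infinite
    (g r s μ : ℤ) (hg : 3 ≤ g) (hr : 1 ≤ r) (hs : 1 ≤ s)
    (hcop : Int.gcd μ (2 * g - 2) = 1)
    (hdiv : r ∣ (g - 1) ∨ s ∣ (g - 1) ∨ r ∣ 2 ∨ s ∣ 2) :
    (Dset g r s μ 1 ∪ Dset g r s μ (-1) ∪ Dset g s r μ 1 ∪ Dset g s r μ (-1)).Infinite :=
  Dset_union_infinite_general g r s μ hg hdiv
end

section
/- Let g ≥ 3, r ≥ 1, s ≥ 1 and μ be integers with gcd(μ, 2g−2) = 1. If g − 1 = r·s (the isotropic case), then both 𝒟 = 𝒟₊(g,r,s,μ) ∪ 𝒟₋(g,r,s,μ) and 𝒟̃ = 𝒟̃₊(g,r,s,μ) ∪ 𝒟̃₋(g,r,s,μ) are infinite. -/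
/-! When `g - 1 = r * s`, the right-hand side of the `ε = 1` equation factors as
`r² · ((x + 2s)² - 4s)`, so taking `y = 1` every `x ≡ μ (mod 2g - 2)` yields the
determinant `d = (x + 2s)² - 4s` as soon as it is positive. These values are unbounded,
and the hypothesis `g - 1 = r * s` is symmetric in `r` and `s`. -/

lemma isotropic_rhs_eq {g r s : ℤ} (hiso : g - 1 = r * s) (x : ℤ) :
    (r * x + 2 * (g - 1)) ^ 2 - 4 * (g - 1) * (1 * r - r * s + (g - 1))
      = r ^ 2 * ((x + 2 * s) ^ 2 - 4 * s) := by
  rw [hiso]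
  ring

lemma mem_Dset_one_of_modEq {g r s μ x : ℤ} (hiso : g - 1 = r * s)
    (hx : x ≡ μ [ZMOD 2 * g - 2]) (hd : 1 ≤ (x + 2 * s) ^ 2 - 4 * s) :
    (x + 2 * s) ^ 2 - 4 * s ∈ Dset g r s μ 1 :=
  ⟨hd, x, 1, by rwa [mul_one], by rw [isotropic_rhs_eq hiso]; ring⟩

lemma Dset_one_not_bddAbove {g r s μ : ℤ} (hg : 1 < g) (hiso : g - 1 = r * s) :
    ¬BddAbove (Dset g r s μ 1) := by
  rw [not_bddAbove_iff]
  intro N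
  set k := |N| + |μ| + 6 * |s| + 1 with hk_def
  set x := μ + (2 * g - 2) * k with hx_def
  have hx : x ≡ μ [ZMOD 2 * g - 2] := Int.modEq_iff_dvd.2 ⟨-k, by ring⟩
  have hk : k ≤ (2 * g - 2) * k := le_mul_of_one_le_left (by positivity) (by omega)
  have ht : |N| + 4 * |s| + 1 ≤ x + 2 * s := by
    linarith [neg_abs_le μ, neg_abs_le s]
  have hsq : x + 2 * s ≤ (x + 2 * s) ^ 2 := by nlinarith [abs_nonneg N, abs_nonneg s]
  refine ⟨_, mem_Dset_one_of_modEq hiso hx ?_, ?_⟩ <;>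
    linarith [le_abs_self N, le_abs_self s, abs_nonneg N]

theorem Dset_infinite_isotropic_general
    (g r s μ : ℤ) (hg : 3 ≤ g) (hiso : g - 1 = r * s) :
    (Dset g r s μ 1 ∪ Dset g r s μ (-1)).Infinite ∧
    (Dset g s r μ 1 ∪ Dset g s r μ (-1)).Infinite := by
  have hiso' : g - 1 = s * r := by rw [hiso, mul_comm]
  exact ⟨(Set.infinite_of_not_bddAbove (Dset_one_not_bddAbove (by omega) hiso)).mono
      Set.subset_union_left,
    (Set.infinite_of_not_bddAbove (Dset_one_not_bddAbove (by omega) hiso')).mono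
      Set.subset_union_left⟩

/-- In the isotropic case `g − 1 = rs`, both `𝒟 = 𝒟₊ ∪ 𝒟₋` and
`𝒟̃ = 𝒟̃₊ ∪ 𝒟̃₋` are infinite. -/
theorem Dset_infinite_isotropic
    (g r s μ : ℤ) (hg : 3 ≤ g) (hr : 1 ≤ r) (hs : 1 ≤ s)
    (hcop : Int.gcd μ (2 * g - 2) = 1) (hiso : g - 1 = r * s) :
    (Dset g r s μ 1 ∪ Dset g r s μ (-1)).Infinite ∧
    (Dset g s r μ 1 ∪ Dset g s r μ (-1)).Infinite :=
  Dset_infinite_isotropic_general g r s μ hg hiso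
end

section
/- For every integer g ≥ 5 and every integer μ with gcd(μ, 2g−2) = 1, the set 𝒟 = 𝒟₊(g,2,2,μ) ∪ 𝒟₋(g,2,2,μ) (corresponding to the Mukai vector (2,H,2)) is infinite. -/
/-- For the Mukai vector `(2,H,2)` and any `g ≥ 5`, the set
`𝒟 = 𝒟₊(g,2,2,μ) ∪ 𝒟₋(g,2,2,μ)` is infinite. -/
theorem Dset_infinite_two_two
    (g μ : ℤ) (hg : 5 ≤ g) (hcop : Int.gcd μ (2 * g - 2) = 1) :
    (Dset g 2 2 μ 1 ∪ Dset g 2 2 μ (-1)).Infinite := by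
  set B : ℤ := 2 * g - 2 with hB
  have h8 : (8:ℤ) ≤ B := by simp only [hB]; linarith
  have hμ2 : -|μ| ≤ μ := neg_abs_le μ
  have h0 : (0:ℤ) ≤ |μ| := abs_nonneg μ
  set f : ℕ → ℤ := fun n => (μ + (|μ| + 1 + (n:ℤ)) * B + g - 1)^2 - (g-1)*(g-3) with hf
  have ha : ∀ n : ℕ, 3*g - 3 ≤ μ + (|μ| + 1 + (n:ℤ)) * B + g - 1 := by
    intro n
    have hn : (0:ℤ) ≤ (n:ℤ) := Int.natCast_nonneg n
    nlinarith [mul_nonneg h0 (by linarith : (0:ℤ) ≤ B - 1), mul_nonneg hn (by linarith : (0:ℤ) ≤ B), hB]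
  have hd : ∀ n : ℕ, 1 ≤ f n := by
    intro n
    have h1 := ha n
    simp only [hf]
    nlinarith [sq_nonneg (μ + (|μ| + 1 + (n:ℤ)) * B + g - 1 - (3*g-3))]
  apply Set.infinite_of_injective_forall_mem (f := f)
  · apply StrictMono.injective
    apply strictMono_nat_of_lt_succ
    intro n
    have h1 := ha n
    have h2 := ha (n+1)
    simp only [hf]
    push_cast
    nlinarith [ha n]
  · intro n
    left
    refine ⟨hd n, μ + (|μ| + 1 + (n:ℤ)) * B, 1, ?_, ?_⟩
    · exact Int.modEq_iff_dvd.mpr ⟨-(|μ| + 1 + (n:ℤ)), by ring⟩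
    · simp only [hf]; ring
end
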